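/- arXiv:2202.09224 — 2 statements merged into one kernel-verified Lean document; each statement's English description precedes it below -/
import Mathlib

section
/- If a Leibniz-Rinehart algebra L over a commutative algebra A (with identity structure maps) is equipped with an endomorphism (α_L, φ) in the category of Leibniz-Rinehart algebras, then L with the twisted bracket [x,y]' = α_L([x,y]), twisted anchors ρ'^L(x)(f) = φ(ρ^L(x)(f)), ρ'^R(x)(f) = φ(ρ^R(x)(f)), and twisting map α_L is a Hom-Leibniz-Rinehart algebra over (A, φ). -/
universe u

/-- Hom-Leibniz algebra axioms: left Hom-Jacobi identity and multiplicativity. -/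
def IsHomLeibniz {L : Type*} [AddCommGroup L] (br : L → L → L) (α : L → L) : Prop :=
  (∀ x y z, br (α x) (br y z) = br (br x y) (α z) + br (α y) (br x z)) ∧
  (∀ x y, α (br x y) = br (α x) (α y))

/-- φ-derivation property. -/
def IsPhiDer {A : Type*} [CommRing A] (φA : A →+* A) (δ : A → A) : Prop :=
  ∀ f g, δ (f * g) = φA f * δ g + φA g * δ f

/-- Hom-Leibniz-Rinehart algebra axioms (H01)-(H42), with anchors φ-derivations. -/
def IsHomLR {A : Type*} [CommRing A] {L : Type*} [AddCommGroup L] [Module A L]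
    (φA : A →+* A) (br : L → L → L) (α : L → L) (ρL ρR : L → A → A) : Prop :=
  IsHomLeibniz br α ∧
  (∀ x, IsPhiDer φA (ρL x)) ∧ (∀ x, IsPhiDer φA (ρR x)) ∧
  (∀ f x, α (f • x) = φA f • α x) ∧
  (∀ x f, ρL (α x) (φA f) = φA (ρL x f)) ∧
  (∀ x f, ρR (α x) (φA f) = φA (ρR x f)) ∧
  (∀ x y f, ρR (α y) (ρR x f) = - ρR (α y) (ρL x f)) ∧
  (∀ x y f, ρL (br x y) (φA f) = ρL (α x) (ρL y f) - ρL (α y) (ρL x f)) ∧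
  (∀ x y f, ρR (br x y) (φA f) = ρL (α x) (ρR y f) - ρR (α y) (ρL x f)) ∧
  (∀ x f y, br x (f • y) = φA f • br x y + ρL x f • α y) ∧
  (∀ f x y, br (f • x) y = φA f • br x y - ρR y f • α x) ∧
  (∀ f x g, ρL (f • x) g = φA f * ρL x g) ∧
  (∀ f x g, ρR (f • x) g = φA f * ρR x g)

/-- Hom-action axioms (S11)(=(A11)-(A32)) and (S21)-(S32) of a Hom-Leibniz-Rinehart
algebra `L` on a Hom-Leibniz `A`-algebra `M`. -/
def IsHomAction {A : Type*} [CommRing A] {L : Type*} [AddCommGroup L] [Module A L]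
    {M : Type*} [AddCommGroup M] [Module A M]
    (φA : A →+* A) (brL : L → L → L) (αL : L → L) (ρLL ρRL : L → A → A)
    (brM : M → M → M) (αM : M → M)
    (al : L → M → M) (ar : M → L → M) : Prop :=
  (∀ x y m, ar (αM m) (brL x y) = al (αL x) (ar m y) - ar (al x m) (αL y)) ∧
  (∀ x y m, al (αL x) (ar m y) = ar (αM m) (brL x y) - ar (ar m x) (αL y)) ∧
  (∀ x y m, al (αL x) (al y m) = al (brL x y) (αM m) + al (αL y) (al x m)) ∧
  (∀ x m m', al (αL x) (brM m m') = brM (αM m) (al x m') - brM (ar m x) (αM m')) ∧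
  (∀ x m m', brM (αM m) (al x m') = al (αL x) (brM m m') - brM (al x m) (αM m')) ∧
  (∀ x m m', brM (αM m) (ar m' x) = ar (brM m m') (αL x) + brM (αM m') (ar m x)) ∧
  (∀ x m, αM (al x m) = al (αL x) (αM m)) ∧
  (∀ x m, αM (ar m x) = ar (αM m) (αL x)) ∧
  (∀ f x m, al (f • x) m = φA f • al x m) ∧
  (∀ f x m, ar m (f • x) = φA f • ar m x) ∧
  (∀ f x m, al x (f • m) = φA f • al x m + ρLL x f • αM m) ∧
  (∀ f x m, ar (f • m) x = φA f • ar m x - ρRL x f • αM m)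

/-- Crossed module axioms (CM0)-(CM4) for `∂ = d : M → L`. -/
def IsCrossedMod {A : Type*} [CommRing A] {L : Type*} [AddCommGroup L] [Module A L]
    {M : Type*} [AddCommGroup M] [Module A M]
    (brL : L → L → L) (αL : L → L) (ρLL ρRL : L → A → A)
    (brM : M → M → M) (αM : M → M)
    (al : L → M → M) (ar : M → L → M) (d : M → L) : Prop :=
  (∀ m, αL (d m) = d (αM m)) ∧
  (∀ x m, d (al x m) = brL x (d m)) ∧
  (∀ x m, d (ar m x) = brL (d m) x) ∧
  (∀ m n, al (d m) n = brM m n) ∧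
  (∀ m n, ar m (d n) = brM m n) ∧
  (∀ (f : A) m, d (f • m) = f • d m) ∧
  (∀ m f, ρLL (d m) f = 0) ∧
  (∀ m f, ρRL (d m) f = 0)

/-- Homomorphism of Hom-Leibniz-Rinehart algebras over `(A, φ)`. -/
def IsHLRHom {A : Type*} [CommRing A] {P : Type*} [AddCommGroup P] [Module A P]
    {Q : Type*} [AddCommGroup Q] [Module A Q]
    (brP : P → P → P) (αP : P → P) (ρLP ρRP : P → A → A)
    (brQ : Q → Q → Q) (αQ : Q → Q) (ρLQ ρRQ : Q → A → A)
    (Φ : P → Q) : Prop :=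
  (∀ x y, Φ (x + y) = Φ x + Φ y) ∧
  (∀ (f : A) x, Φ (f • x) = f • Φ x) ∧
  (∀ x, Φ (αP x) = αQ (Φ x)) ∧
  (∀ x y, Φ (brP x y) = brQ (Φ x) (Φ y)) ∧
  (∀ x f, ρLQ (Φ x) f = ρLP x f) ∧
  (∀ x f, ρRQ (Φ x) f = ρRP x f)

/-- Morphism of crossed `L`-modules. -/
def IsCMHom {A : Type*} [CommRing A] {L : Type*} {M : Type*} [AddCommGroup M] [Module A M]
    {M' : Type*} [AddCommGroup M'] [Module A M']
    (brM : M → M → M) (αM : M → M) (al : L → M → M) (ar : M → L → M) (dM : M → L)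
    (brM' : M' → M' → M') (αM' : M' → M') (al' : L → M' → M') (ar' : M' → L → M')
    (dM' : M' → L) (lam : M → M') : Prop :=
  (∀ a b, lam (a + b) = lam a + lam b) ∧
  (∀ (f : A) m, lam (f • m) = f • lam m) ∧
  (∀ a b, lam (brM a b) = brM' (lam a) (lam b)) ∧
  (∀ m, lam (αM m) = αM' (lam m)) ∧
  (∀ m, dM' (lam m) = dM m) ∧
  (∀ x m, lam (al x m) = al' x (lam m)) ∧
  (∀ x m, lam (ar m x) = ar' (lam m) x)

/-- Semidirect product bracket on `L × M`. -/
def sdBr {L M : Type*} [AddCommGroup M] (brL : L → L → L) (αL : L → L)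
    (brM : M → M → M) (al : L → M → M) (ar : M → L → M) :
    L × M → L × M → L × M :=
  fun p q => (brL p.1 q.1, brM p.2 q.2 + al (αL p.1) q.2 + ar p.2 (αL q.1))

/-- Semidirect product twisting map on `L × M`. -/
def sdAl {L M : Type*} (αL : L → L) (αM : M → M) : L × M → L × M :=
  fun p => (αL p.1, αM p.2)

/-- Additivity (bilinearity over `ℤ`) package for the structure maps of a
Hom-Leibniz algebra with an action. -/
def IsAdditivePack {L M : Type*} [AddCommGroup L] [AddCommGroup M]
    (brL : L → L → L) (αL : L → L) (brM : M → M → M) (αM : M → M)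
    (al : L → M → M) (ar : M → L → M) : Prop :=
  (∀ x y z, brL (x + y) z = brL x z + brL y z) ∧
  (∀ x y z, brL x (y + z) = brL x y + brL x z) ∧
  (∀ x y, αL (x + y) = αL x + αL y) ∧
  (∀ a b c, brM (a + b) c = brM a c + brM b c) ∧
  (∀ a b c, brM a (b + c) = brM a b + brM a c) ∧
  (∀ a b, αM (a + b) = αM a + αM b) ∧
  (∀ x y m, al (x + y) m = al x m + al y m) ∧
  (∀ x m n, al x (m + n) = al x m + al x n) ∧
  (∀ x m n, ar (m + n) x = ar m x + ar n x) ∧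
  (∀ x y m, ar m (x + y) = ar m x + ar m y)

/-- twisting a Leibniz-Rinehart algebra (identity structure maps) by an
endomorphism `(α_L, φ)` yields a Hom-Leibniz-Rinehart algebra over `(A, φ)`. -/
theorem twist_leibniz_rinehart_is_homLR
    {A : Type*} [CommRing A] {L : Type*} [AddCommGroup L] [Module A L]
    (φA : A →+* A) (br : L → L → L) (α : L → L) (ρL ρR : L → A → A)
    -- `L` is a Leibniz-Rinehart algebra: Hom-Leibniz-Rinehart with identity structure maps
    (h : IsHomLR (RingHom.id A) br (id : L → L) ρL ρR)
    -- `(α, φA)` is an endomorphism in the category of Leibniz-Rinehart algebras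
    (hadd : ∀ x y, α (x + y) = α x + α y)
    (hlin : ∀ (f : A) x, α (f • x) = φA f • α x)
    (hbr : ∀ x y, α (br x y) = br (α x) (α y))
    (hρL : ∀ x f, ρL (α x) (φA f) = φA (ρL x f))
    (hρR : ∀ x f, ρR (α x) (φA f) = φA (ρR x f)) :
    IsHomLR φA (fun x y => α (br x y)) α
      (fun x f => φA (ρL x f)) (fun x f => φA (ρR x f)) := by

  obtain ⟨⟨hj, _⟩, hDL, hDR, _, _, _, hRR, hbrL, hbrR, hsmulR, hsmulL, hρLs, hρRs⟩ := h
  simp only [IsHomLeibniz, IsPhiDer, IsHomLR, RingHom.id_apply, id_eq] at *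
  have hzero : α 0 = 0 := by
    have := hadd 0 0; simpa using this.symm
  have hneg : ∀ x, α (-x) = - α x := by
    intro x
    have := hadd x (-x); rw [add_neg_cancel, hzero] at this
    exact eq_neg_of_add_eq_zero_left (by rw [add_comm]; exact this.symm)
  refine ⟨⟨?_, ?_⟩, ?_, ?_, ?_, ?_, ?_, ?_, ?_, ?_, ?_, ?_, ?_, ?_⟩
  · intro x y z
    rw [← hbr, ← hbr, ← hbr, hj, hadd, hadd]
  · intro x y
    rw [hbr]
  · intro x f g
    rw [hDL x f g, map_add, map_mul, map_mul]
  · intro x f g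
    rw [hDR x f g, map_add, map_mul, map_mul]
  · exact hlin
  · intro x f; rw [hρL]
  · intro x f; rw [hρR]
  · intro x y f
    rw [hρR, hρR, hRR, map_neg, map_neg]
  · intro x y f
    rw [hρL, hρL, hρL, hbrL, map_sub, map_sub]
  · intro x y f
    rw [hρR, hρL, hρR, hbrR, map_sub, map_sub]
  · intro x f y
    rw [hsmulR, hadd, hlin, hlin]
  · intro f x y
    rw [hsmulL, sub_eq_add_neg, hadd, hlin, hneg, hlin, ← sub_eq_add_neg]
  · intro f x g
    rw [hρLs, map_mul]
  · intro f x g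
    rw [hρRs, map_mul]
end

section
/- Let C = (i; s, t : P → L) be a cat¹-Hom-Leibniz-Rinehart algebra with P = L ⋊ M for a Hom-Leibniz A-algebra M, where s is the first-projection composed with α_L. Set N = ker s ≅ M and ∂ = t|_N : M → L. Then ∂ satisfies (CM0): α_L∘∂ = ∂∘α_M, and (CM1): ∂[x,m] = [x, ∂m]_L and ∂[m,x] = [∂m, x]_L for all x ∈ L, m ∈ M, assuming α_L is surjective. -/
universe u

/-- for a cat¹-Hom-Leibniz-Rinehart algebra with `P = L ⋊ M`,
`s(x,m) = α_L x`, and `∂ m := t(0,m)`, the map `∂` satisfies (CM0) and (CM1),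
assuming `α_L` surjective. -/
theorem cat1_gives_CM0_CM1
    {A : Type*} [CommRing A]
    {L : Type*} [AddCommGroup L] [Module A L]
    {M : Type*} [AddCommGroup M] [Module A M]
    (φA : A →+* A)
    (brL : L → L → L) (αL : L → L) (ρLL ρRL : L → A → A)
    (brM : M → M → M) (αM : M → M) (al : L → M → M) (ar : M → L → M)
    (hL : IsHomLR φA brL αL ρLL ρRL)
    (hM : IsHomLeibniz brM αM)
    (hadd : IsAdditivePack brL αL brM αM al ar)
    (hAct : IsHomAction φA brL αL ρLL ρRL brM αM al ar)
    (t : L × M → L)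
    -- `t` is a homomorphism of Hom-Leibniz algebras on `P = L ⋊ M`
    (htadd : ∀ p q, t (p + q) = t p + t q)
    (htbr : ∀ p q, t (sdBr brL αL brM al ar p q) = brL (t p) (t q))
    (htα : ∀ p, t (sdAl αL αM p) = αL (t p))
    -- (Cat1) with `s(x,m) = α_L x` and `i x = (x, 0)`:
    (hCat1a : ∀ p : L × M, αL (t p) = t (sdAl αL αM p))
    (hCat1b : ∀ p : L × M, t ((αL p.1, 0)) = αL (αL p.1))
    (hsurj : Function.Surjective αL) :
    -- (CM0) and (CM1) for `∂ m = t (0, m)`: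
    (∀ m, αL (t (0, m)) = t (0, αM m)) ∧
    (∀ x m, t (0, al x m) = brL x (t (0, m))) ∧
    (∀ x m, t (0, ar m x) = brL (t (0, m)) x) := by
  obtain ⟨hbrLl, hbrLr, hαL, hbrMl, hbrMr, hαM, hall, halr, harl, harr⟩ := hadd
  have hαL0 : αL 0 = 0 := by have := hαL 0 0; simpa using this.symm
  have hbrL0r : ∀ x, brL x 0 = 0 := fun x => by
    have := hbrLr x 0 0; simpa using this.symm
  have hbrL0l : ∀ x, brL 0 x = 0 := fun x => by
    have := hbrLl 0 0 x; simpa using this.symm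
  have hbrM0r : ∀ m, brM m 0 = 0 := fun m => by
    have := hbrMr m 0 0; simpa using this.symm
  have hbrM0l : ∀ m, brM 0 m = 0 := fun m => by
    have := hbrMl 0 0 m; simpa using this.symm
  have hal0 : ∀ x, al x 0 = 0 := fun x => by
    have := halr x 0 0; simpa using this.symm
  have har0 : ∀ x, ar 0 x = 0 := fun x => by
    have := harl x 0 0; simpa using this.symm
  refine ⟨fun m => ?_, fun x m => ?_, fun x m => ?_⟩
  · have := hCat1a (0, m)
    simpa [sdAl, hαL0] using this
  · obtain ⟨z, hz⟩ := hsurj x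
    obtain ⟨w, hw⟩ := hsurj z
    have hb := htbr (αL w, 0) (0, m)
    have h1 : sdBr brL αL brM al ar (αL w, 0) (0, m) = (0, al x m) := by
      simp [sdBr, hbrL0r, hbrM0l, har0, hw, hz]
    have ht0 : t (αL w, 0) = x := by
      have := hCat1b (w, 0); simpa [hw, hz] using this
    rw [h1, ht0] at hb
    exact hb
  · obtain ⟨z, hz⟩ := hsurj x
    obtain ⟨w, hw⟩ := hsurj z
    have hb := htbr (0, m) (αL w, 0)
    have h1 : sdBr brL αL brM al ar (0, m) (αL w, 0) = (0, ar m x) := by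
      simp [sdBr, hbrL0l, hbrM0r, hαL0, hal0, hw, hz]
    have ht0 : t (αL w, 0) = x := by
      have := hCat1b (w, 0); simpa [hw, hz] using this
    rw [h1, ht0] at hb
    exact hb
end
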